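/- For every d with 2 ≤ d < ∞, the code C_{(2,d,d)} has an open convex realization in ℝ^2. -/

import Mathlib

open Set

noncomputable section

/-- Euclidean space `ℝ^d`. -/
abbrev Euc (d : ℕ) : Type := EuclideanSpace ℝ (Fin d)

/-- The code of a collection of sets `U = (U 0, …, U (n-1))` in `ℝ^d`. -/
def codeOf {n d : ℕ} (U : Fin n → Set (Euc d)) : Set (Finset (Fin n)) :=
  {σ | ∃ p : Euc d, ∀ i : Fin n, p ∈ U i ↔ i ∈ σ}

/-- `U` is an open convex realization of the code `C`. -/
def IsOpenReal {n d : ℕ} (C : Set (Finset (Fin n))) (U : Fin n → Set (Euc d)) : Prop :=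
  (∀ i, Convex ℝ (U i)) ∧ (∀ i, IsOpen (U i)) ∧ codeOf U = C

/-- `X` is a closed convex realization of the code `C`. -/
def IsClosedReal {n d : ℕ} (C : Set (Finset (Fin n))) (X : Fin n → Set (Euc d)) : Prop :=
  (∀ i, Convex ℝ (X i)) ∧ (∀ i, IsClosed (X i)) ∧ codeOf X = C

/-- `C` has an open convex realization in `ℝ^d`. -/
def HasOpenReal {n : ℕ} (C : Set (Finset (Fin n))) (d : ℕ) : Prop :=
  ∃ U : Fin n → Set (Euc d), IsOpenReal C U

/-- `C` has a closed convex realization in `ℝ^d`. -/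
def HasClosedReal {n : ℕ} (C : Set (Finset (Fin n))) (d : ℕ) : Prop :=
  ∃ X : Fin n → Set (Euc d), IsClosedReal C X

/-- `U` is a non-degenerate open convex realization of `C`: it is an open convex
realization and the closures of its sets realize the same code. -/
def IsNondegOpenReal {n d : ℕ} (C : Set (Finset (Fin n))) (U : Fin n → Set (Euc d)) : Prop :=
  IsOpenReal C U ∧ codeOf (fun i => closure (U i)) = C

/-- `X` is a non-degenerate closed convex realization of `C`: it is a closed convex
realization and the interiors of its sets realize the same code. -/
def IsNondegClosedReal {n d : ℕ} (C : Set (Finset (Fin n))) (X : Fin n → Set (Euc d)) : Prop :=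
  IsClosedReal C X ∧ codeOf (fun i => interior (X i)) = C

/-- `C` has a non-degenerate (open or closed) convex realization in `ℝ^d`. -/
def HasNondegReal {n : ℕ} (C : Set (Finset (Fin n))) (d : ℕ) : Prop :=
  (∃ U : Fin n → Set (Euc d), IsNondegOpenReal C U) ∨
  (∃ X : Fin n → Set (Euc d), IsNondegClosedReal C X)

/-- Open embedding dimension (`⊤` if no open convex realization exists). -/
def odim {n : ℕ} (C : Set (Finset (Fin n))) : ℕ∞ :=
  sInf {e : ℕ∞ | ∃ d : ℕ, e = d ∧ HasOpenReal C d}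

/-- Closed embedding dimension (`⊤` if no closed convex realization exists). -/
def cdim {n : ℕ} (C : Set (Finset (Fin n))) : ℕ∞ :=
  sInf {e : ℕ∞ | ∃ d : ℕ, e = d ∧ HasClosedReal C d}

/-- Non-degenerate embedding dimension (`⊤` if no non-degenerate realization exists). -/
def nddim {n : ℕ} (C : Set (Finset (Fin n))) : ℕ∞ :=
  sInf {e : ℕ∞ | ∃ d : ℕ, e = d ∧ HasNondegReal C d}

/-- Index of `α_i` in the base set of `C_{(2,d,d)}`. -/
def idxA (d : ℕ) (i : Fin d) : Fin (4 * d) := ⟨i.1, by have := i.2; omega⟩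
/-- Index of `β_i` in the base set of `C_{(2,d,d)}`. -/
def idxB (d : ℕ) (i : Fin d) : Fin (4 * d) := ⟨d + i.1, by have := i.2; omega⟩
/-- Index of `γ_i` in the base set of `C_{(2,d,d)}`. -/
def idxC (d : ℕ) (i : Fin d) : Fin (4 * d) := ⟨2 * d + i.1, by have := i.2; omega⟩
/-- Index of `δ_i` in the base set of `C_{(2,d,d)}`. -/
def idxD (d : ℕ) (i : Fin d) : Fin (4 * d) := ⟨3 * d + i.1, by have := i.2; omega⟩

/-- The code `C_{(2,d,d)}` on the `4d` neurons `α_1,…,α_d,β_1,…,β_d,γ_1,…,γ_d,δ_1,…,δ_d`. -/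
def code2dd (d : ℕ) : Set (Finset (Fin (4 * d))) :=
  {σ | σ = ∅ ∨
    (∃ i : Fin d, σ = {idxB d i, idxC d i}) ∨
    (∃ i j : Fin d, (j : ℕ) = (i : ℕ) + 1 ∧ σ = {idxB d i, idxB d j, idxC d i}) ∨
    (∃ i j : Fin d, (j : ℕ) = (i : ℕ) + 1 ∧ σ = {idxB d i, idxB d j}) ∨
    (∃ i j : Fin d, (j : ℕ) = (i : ℕ) + 1 ∧ σ = {idxB d i, idxB d j, idxC d j}) ∨
    (∃ i : Fin d, σ = {idxA d i, idxB d i, idxC d i, idxD d i}) ∨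
    (∃ i : Fin d, σ = {idxA d i, idxD d i}) ∨
    σ = Finset.univ.image (idxA d) ∪ Finset.univ.image (idxD d) ∨
    σ = Finset.univ.image (idxD d)}

/-!
Put `φ = angle d = π / (2(d + 2))`, `dir k = (sin kφ, cos kφ)` for `0 ≤ k ≤ d + 1`, and
`level k p = ⟪dir k, p⟫`. The neurons with index `i` use direction `i + 1`; the directions `0`
and `d + 1` only serve as guards. `δ_i` is the regular polygon `{level k < 1 for all k}` with side
`i + 1` pushed out a little, and `α_i` is its part where `p 1 > 0`. `β_i` is the region where
`level (i + 1)` exceeds a threshold, no level is much larger, and only the two neighbouring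
directions come close; `γ_i ⊆ β_i` cuts off the parts leaning towards a neighbouring `β`.

Since `dir k + dir (k + 2) = 2 cos φ • dir (k + 1)`, the two neighbours of a high direction
cannot both be high: the `β`s meet only along a path, and a lone `β` lies in its `γ`. The identity
`sin φ * p 1 = sin ((k + 1) φ) * level k p - sin (k φ) * level (k + 1) p` shows that a point
beyond side `k` of the polygon has `p 1 > 0`, which puts the pushed-out part of `δ_i` inside
`α_i`. Every codeword is witnessed by a nonnegative combination of one or two consecutive `dir k`.
-/

section OpenConvex

variable {E : Type*} [AddCommGroup E] [Module ℝ E] [TopologicalSpace E]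

def IsOpenConvex (s : Set E) : Prop := IsOpen s ∧ Convex ℝ s

lemma IsOpenConvex.inter {s t : Set E} (hs : IsOpenConvex s) (ht : IsOpenConvex t) :
    IsOpenConvex (s ∩ t) :=
  ⟨hs.1.inter ht.1, hs.2.inter ht.2⟩

lemma isOpenConvex_iInter_prop {P : Prop} {s : P → Set E} (h : ∀ hP, IsOpenConvex (s hP)) :
    IsOpenConvex (⋂ hP, s hP) :=
  ⟨isOpen_iInter_of_finite fun hP => (h hP).1, convex_iInter fun hP => (h hP).2⟩

lemma isOpenConvex_iInter_le (n : ℕ) {s : ℕ → Set E} (h : ∀ k ≤ n, IsOpenConvex (s k)) :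
    IsOpenConvex (⋂ k, ⋂ (_ : k ≤ n), s k) :=
  ⟨(Set.finite_le_nat n).isOpen_biInter fun k hk => (h k hk).1,
    convex_iInter₂ fun k hk => (h k hk).2⟩

lemma isOpenConvex_setOf_lt (ℓ : E →L[ℝ] ℝ) (c : ℝ) : IsOpenConvex {p | ℓ p < c} :=
  ⟨isOpen_lt ℓ.continuous continuous_const, convex_halfSpace_lt ℓ.toLinearMap.isLinear c⟩

lemma isOpenConvex_setOf_gt (ℓ : E →L[ℝ] ℝ) (c : ℝ) : IsOpenConvex {p | c < ℓ p} :=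
  ⟨isOpen_lt continuous_const ℓ.continuous, convex_halfSpace_gt ℓ.toLinearMap.isLinear c⟩

end OpenConvex

section Codeword

variable {n d : ℕ}

open Classical in
def codeword (U : Fin n → Set (Euc d)) (p : Euc d) : Finset (Fin n) :=
  Finset.univ.filter (p ∈ U ·)

lemma mem_codeword {U : Fin n → Set (Euc d)} {p : Euc d} {i : Fin n} :
    i ∈ codeword U p ↔ p ∈ U i := by
  simp [codeword]

lemma codeOf_eq_range (U : Fin n → Set (Euc d)) : codeOf U = Set.range (codeword U) := by
  ext σ
  constructor
  · rintro ⟨p, hp⟩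
    exact ⟨p, Finset.ext fun i => by rw [mem_codeword, hp]⟩
  · rintro ⟨p, rfl⟩
    exact ⟨p, fun i => mem_codeword.symm⟩

end Codeword

namespace Code2dd

open Real

variable {d : ℕ}

def angle (d : ℕ) : ℝ := π / (2 * (d + 2))

lemma angle_pos : 0 < angle d := by unfold angle; positivity

lemma mul_angle_le_pi_div_two {t : ℝ} (ht : t ≤ d + 2) : t * angle d ≤ π / 2 :=
  calc t * angle d ≤ (d + 2) * angle d := mul_le_mul_of_nonneg_right ht angle_pos.le
    _ = π / 2 := by unfold angle; field_simp

lemma angle_lt_pi_div_two : angle d < π / 2 :=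
  calc angle d < (d + 2) * angle d :=
        lt_mul_of_one_lt_left angle_pos (by linarith [d.cast_nonneg (α := ℝ)])
    _ ≤ π / 2 := mul_angle_le_pi_div_two le_rfl

lemma cos_angle_pos : 0 < cos (angle d) :=
  cos_pos_of_mem_Ioo ⟨by linarith [angle_pos (d := d), pi_pos], angle_lt_pi_div_two⟩

lemma cos_angle_lt_one : cos (angle d) < 1 := by
  simpa using cos_lt_cos_of_nonneg_of_le_pi le_rfl
    (by linarith [angle_lt_pi_div_two (d := d), pi_pos]) (angle_pos (d := d))

lemma sin_angle_pos : 0 < sin (angle d) :=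
  sin_pos_of_pos_of_lt_pi angle_pos (by linarith [angle_lt_pi_div_two (d := d), pi_pos])

lemma cos_mul_angle_le_cos_angle {t : ℝ} (h1 : 1 ≤ |t|) (h2 : |t| ≤ d + 2) :
    cos (t * angle d) ≤ cos (angle d) := by
  rw [← cos_abs, abs_mul, abs_of_pos angle_pos]
  exact cos_le_cos_of_nonneg_of_le_pi angle_pos.le
    (by linarith [mul_angle_le_pi_div_two h2, pi_pos]) (le_mul_of_one_le_left angle_pos.le h1)

lemma cos_mul_angle_le_sq {t : ℝ} (h1 : 2 ≤ |t|) (h2 : |t| ≤ d + 2) :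
    cos (t * angle d) ≤ cos (angle d) ^ 2 := by
  have hcos2 : cos (t * angle d) ≤ cos (2 * angle d) := by
    rw [← cos_abs, abs_mul, abs_of_pos angle_pos]
    exact cos_le_cos_of_nonneg_of_le_pi (by linarith [angle_pos (d := d)])
      (by linarith [mul_angle_le_pi_div_two h2, pi_pos])
      (mul_le_mul_of_nonneg_right h1 angle_pos.le)
  rw [cos_two_mul] at hcos2
  nlinarith [cos_sq_le_one (angle d)]

lemma sin_mul_angle_nonneg {k : ℕ} (hk : k ≤ d + 2) : 0 ≤ sin (k * angle d) :=
  sin_nonneg_of_nonneg_of_le_pi (mul_nonneg k.cast_nonneg angle_pos.le)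
    (by linarith [mul_angle_le_pi_div_two (d := d) (t := k) (by exact_mod_cast hk), pi_pos])

lemma sin_mul_angle_lt_succ {k : ℕ} (hk : k + 1 ≤ d + 2) :
    sin (k * angle d) < sin ((k + 1 : ℕ) * angle d) :=
  sin_lt_sin_of_lt_of_le_pi_div_two (by nlinarith [pi_pos, angle_pos (d := d)])
    (mul_angle_le_pi_div_two (by exact_mod_cast hk))
    (mul_lt_mul_of_pos_right (by simp) angle_pos)

def dir (d k : ℕ) : Euc 2 := !₂[sin (k * angle d), cos (k * angle d)]

def level (d k : ℕ) : Euc 2 →L[ℝ] ℝ :=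
  sin (k * angle d) • EuclideanSpace.proj 0 + cos (k * angle d) • EuclideanSpace.proj 1

lemma level_apply (k : ℕ) (p : Euc 2) :
    level d k p = sin (k * angle d) * p 0 + cos (k * angle d) * p 1 := rfl

lemma level_dir (k j : ℕ) : level d k (dir d j) = cos ((k - j : ℝ) * angle d) := by
  simp [level_apply, dir, sub_mul, cos_sub]
  ring

lemma level_add_level_add_two (k : ℕ) (p : Euc 2) :
    level d k p + level d (k + 2) p = 2 * cos (angle d) * level d (k + 1) p := by
  have h₀ : (k : ℝ) * angle d = (k + 1 : ℕ) * angle d - angle d := by push_cast; ring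
  have h₂ : ((k + 2 : ℕ) : ℝ) * angle d = (k + 1 : ℕ) * angle d + angle d := by push_cast; ring
  simp only [level_apply, h₀, h₂, sin_add, sin_sub, cos_add, cos_sub]
  ring

lemma sin_angle_mul_coord_one (k : ℕ) (p : Euc 2) :
    sin (angle d) * p 1 =
      sin ((k + 1 : ℕ) * angle d) * level d k p - sin (k * angle d) * level d (k + 1) p := by
  have h : ((k + 1 : ℕ) : ℝ) * angle d = k * angle d + angle d := by push_cast; ring
  simp only [level_apply, h, sin_add, cos_add]
  linear_combination (-(sin (angle d) * p 1)) * sin_sq_add_cos_sq ((k : ℝ) * angle d)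

lemma coord_one_pos {k : ℕ} {p : Euc 2} (hk : k + 1 ≤ d + 2) (hhigh : 1 ≤ level d k p)
    (hlow : level d (k + 1) p < 1) : 0 < p 1 := by
  have h₀ := sin_mul_angle_nonneg (d := d) (k := k) (by omega)
  have h₁ := sin_mul_angle_lt_succ hk
  have key := sin_angle_mul_coord_one (d := d) k p
  have : 0 < sin (angle d) * p 1 := by nlinarith
  exact pos_of_mul_pos_right this sin_angle_pos.le

lemma natCast_le_abs_sub {a b m : ℕ} (h : a + m ≤ b ∨ b + m ≤ a) : (m : ℝ) ≤ |(a : ℝ) - b| := by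
  rw [le_abs]
  rcases h with h | h
  · right
    have : ((a + m : ℕ) : ℝ) ≤ b := by exact_mod_cast h
    push_cast at this
    linarith
  · left
    have : ((b + m : ℕ) : ℝ) ≤ a := by exact_mod_cast h
    push_cast at this
    linarith

lemma abs_natCast_sub_le {a b : ℕ} (ha : a ≤ d + 2) (hb : b ≤ d + 2) : |(a : ℝ) - b| ≤ d + 2 := by
  have ha' : (a : ℝ) ≤ d + 2 := by exact_mod_cast ha
  have hb' : (b : ℝ) ≤ d + 2 := by exact_mod_cast hb
  exact abs_sub_le_iff.2
    ⟨by linarith [b.cast_nonneg (α := ℝ)], by linarith [a.cast_nonneg (α := ℝ)]⟩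

lemma level_dir_self (k : ℕ) : level d k (dir d k) = 1 := by
  simp [level_dir]

lemma level_dir_succ (k : ℕ) : level d k (dir d (k + 1)) = cos (angle d) := by
  rw [level_dir, ← cos_neg]
  push_cast
  ring_nf

lemma level_succ_dir (k : ℕ) : level d (k + 1) (dir d k) = cos (angle d) := by
  rw [level_dir]
  push_cast
  ring_nf

lemma level_dir_le_cos_angle {k j : ℕ} (hk : k ≤ d + 2) (hj : j ≤ d + 2) (hkj : k ≠ j) :
    level d k (dir d j) ≤ cos (angle d) := by
  rw [level_dir]
  exact cos_mul_angle_le_cos_angle (by exact_mod_cast natCast_le_abs_sub (m := 1) (by omega))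
    (abs_natCast_sub_le hk hj)

lemma level_dir_le_sq {k j : ℕ} (hk : k ≤ d + 2) (hj : j ≤ d + 2) (hkj : k + 2 ≤ j ∨ j + 2 ≤ k) :
    level d k (dir d j) ≤ cos (angle d) ^ 2 := by
  rw [level_dir]
  exact cos_mul_angle_le_sq (by exact_mod_cast natCast_le_abs_sub (m := 2) hkj)
    (abs_natCast_sub_le hk hj)

-- The construction only needs `1 < betaLow < deltaCap < betaCap < 2`,
-- `cos (angle d) * betaCap < 1` and `betaCap - betaLow = 2 * betaTol`.
def gap (d : ℕ) : ℝ := 1 - cos (angle d)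
def betaLow (d : ℕ) : ℝ := 1 + gap d / 4
def deltaCap (d : ℕ) : ℝ := 1 + 3 * gap d / 8
def betaCap (d : ℕ) : ℝ := 1 + gap d / 2
def betaTol (d : ℕ) : ℝ := gap d / 8

lemma gap_pos : 0 < gap d := by unfold gap; linarith [cos_angle_lt_one (d := d)]

lemma gap_lt_one : gap d < 1 := by unfold gap; linarith [cos_angle_pos (d := d)]

lemma one_lt_betaLow : 1 < betaLow d := by unfold betaLow; linarith [gap_pos (d := d)]

lemma betaLow_lt_deltaCap : betaLow d < deltaCap d := by
  unfold betaLow deltaCap; linarith [gap_pos (d := d)]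

lemma deltaCap_lt_betaCap : deltaCap d < betaCap d := by
  unfold deltaCap betaCap; linarith [gap_pos (d := d)]

lemma betaCap_lt_two : betaCap d < 2 := by unfold betaCap; linarith [gap_lt_one (d := d)]

lemma betaTol_pos : 0 < betaTol d := by unfold betaTol; linarith [gap_pos (d := d)]

lemma betaCap_sub_betaLow : betaCap d - betaLow d = 2 * betaTol d := by
  unfold betaCap betaLow betaTol; ring

lemma cos_angle_mul_betaCap_lt_one : cos (angle d) * betaCap d < 1 := by
  have h : cos (angle d) = 1 - gap d := by unfold gap; ring
  rw [h]; unfold betaCap; nlinarith [gap_pos (d := d)]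

def betaSet (d n : ℕ) : Set (Euc 2) :=
  {p | betaLow d < level d n p ∧ ∀ k ≤ d + 1, level d k p < betaCap d ∧
    level d k p - level d n p < betaTol d ∧ (k + 1 < n ∨ n + 1 < k → level d k p < betaLow d)}

def gammaSet (d n : ℕ) : Set (Euc 2) :=
  betaSet d n ∩ {p | ∀ k ≤ d, 1 ≤ k → (k + 1 = n ∨ n + 1 = k) →
    3 * level d k p - 2 * level d n p < betaLow d}

def deltaSet (d n : ℕ) : Set (Euc 2) :=
  {p | level d n p < deltaCap d ∧ ∀ k ≤ d + 1, k ≠ n → level d k p < 1}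

def alphaSet (d n : ℕ) : Set (Euc 2) := deltaSet d n ∩ {p | 0 < p 1}

lemma isOpenConvex_betaSet (n : ℕ) : IsOpenConvex (betaSet d n) := by
  simp only [betaSet, ofPred_and, ofPred_forall]
  exact (isOpenConvex_setOf_gt _ _).inter <| isOpenConvex_iInter_le _ fun k _ =>
    (isOpenConvex_setOf_lt _ _).inter <| (isOpenConvex_setOf_lt (level d k - level d n) _).inter <|
      isOpenConvex_iInter_prop fun _ => isOpenConvex_setOf_lt _ _

lemma isOpenConvex_gammaSet (n : ℕ) : IsOpenConvex (gammaSet d n) := by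
  simp only [gammaSet, ofPred_forall]
  exact (isOpenConvex_betaSet n).inter <| isOpenConvex_iInter_le _ fun k _ =>
    isOpenConvex_iInter_prop fun _ => isOpenConvex_iInter_prop fun _ =>
      isOpenConvex_setOf_lt ((3 : ℝ) • level d k - (2 : ℝ) • level d n) _

lemma isOpenConvex_deltaSet (n : ℕ) : IsOpenConvex (deltaSet d n) := by
  simp only [deltaSet, ofPred_and, ofPred_forall]
  exact (isOpenConvex_setOf_lt _ _).inter <| isOpenConvex_iInter_le _ fun k _ =>
    isOpenConvex_iInter_prop fun _ => isOpenConvex_setOf_lt _ _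

lemma isOpenConvex_alphaSet (n : ℕ) : IsOpenConvex (alphaSet d n) :=
  (isOpenConvex_deltaSet n).inter (isOpenConvex_setOf_gt (EuclideanSpace.proj 1) 0)

variable {p : Euc 2} {k n : ℕ}

lemma betaLow_lt_level (hp : p ∈ betaSet d n) : betaLow d < level d n p := hp.1

lemma level_lt_betaCap (hp : p ∈ betaSet d n) (hk : k ≤ d + 1) : level d k p < betaCap d :=
  (hp.2 k hk).1

lemma level_lt_betaLow (hp : p ∈ betaSet d n) (hk : k ≤ d + 1) (hfar : k + 1 < n ∨ n + 1 < k) :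
    level d k p < betaLow d :=
  (hp.2 k hk).2.2 hfar

lemma mem_betaSet_of_forall_lt_betaLow {n' : ℕ} (hadj : n' + 1 = n ∨ n + 1 = n')
    (hlow : betaLow d < level d n p) (hcap : level d n p < betaCap d)
    (hcap' : level d n' p < betaCap d) (htol : level d n' p - level d n p < betaTol d)
    (hothers : ∀ k ≤ d + 1, k ≠ n → k ≠ n' → level d k p < betaLow d) : p ∈ betaSet d n := by
  have hLC : betaLow d < betaCap d := by
    linarith [betaCap_sub_betaLow (d := d), betaTol_pos (d := d)]
  refine ⟨hlow, fun k hk => ?_⟩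
  by_cases hkn : k = n
  · subst hkn
    exact ⟨hcap, by simpa using betaTol_pos, by omega⟩
  by_cases hkn' : k = n'
  · subst hkn'
    exact ⟨hcap', htol, by omega⟩
  have hk := hothers k hk hkn hkn'
  exact ⟨by linarith, by linarith [betaTol_pos (d := d)], fun _ => hk⟩

lemma eq_or_adjacent_of_mem_betaSet {m : ℕ} (hm : p ∈ betaSet d m) (hn : p ∈ betaSet d n)
    (hnd : n ≤ d + 1) : m = n ∨ m + 1 = n ∨ n + 1 = m := by
  by_contra! h
  linarith [level_lt_betaLow hm hnd (by omega), betaLow_lt_level hn]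

lemma level_add_level_add_two_lt (hp : p ∈ betaSet d (k + 1)) (hk : k + 1 ≤ d + 1) :
    level d k p + level d (k + 2) p < 2 * betaLow d := by
  rw [level_add_level_add_two]
  have := mul_lt_mul_of_pos_left (level_lt_betaCap hp hk)
    (cos_angle_pos (d := d))
  linarith [cos_angle_mul_betaCap_lt_one (d := d), one_lt_betaLow (d := d)]

lemma mem_betaSet_of_adjacent {n' : ℕ} (hp : p ∈ betaSet d n) (hadj : n' + 1 = n ∨ n + 1 = n')
    (hn : n ≤ d + 1) (hn' : n' ≤ d + 1) (hW : betaLow d ≤ 3 * level d n' p - 2 * level d n p) :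
    p ∈ betaSet d n' := by
  have hlow := betaLow_lt_level hp
  have hcap := level_lt_betaCap hp hn
  have hothers : ∀ k ≤ d + 1, k ≠ n → k ≠ n' → level d k p < betaLow d := by
    intro k hk hkn hkn'
    by_cases hfar : k + 1 < n ∨ n + 1 < k
    · exact level_lt_betaLow hp hk hfar
    have hsum : level d k p + level d n' p < 2 * betaLow d := by
      rcases hadj with rfl | rfl
      · obtain rfl : k = n' + 2 := by omega
        linarith [level_add_level_add_two_lt hp (by omega)]
      · obtain rfl : n = k + 1 := by omega
        linarith [level_add_level_add_two_lt hp (by omega)]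
    linarith
  refine mem_betaSet_of_forall_lt_betaLow (n' := n) (by omega) (by linarith)
    (level_lt_betaCap hp hn') hcap ?_ fun k hk h h' => hothers k hk h' h
  linarith [betaCap_sub_betaLow (d := d), betaTol_pos (d := d)]

lemma mem_gammaSet_of_unique (hp : p ∈ betaSet d n) (hn : n ≤ d + 1)
    (huniq : ∀ m, 1 ≤ m → m ≤ d → p ∈ betaSet d m → m = n) : p ∈ gammaSet d n := by
  refine ⟨hp, fun k hk hk1 hadj => ?_⟩
  by_contra! hW
  have := huniq k hk1 hk (mem_betaSet_of_adjacent hp hadj (by omega) (by omega) hW)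
  omega

lemma mem_gammaSet_iff_of_adjacent {n' : ℕ} (hn : p ∈ betaSet d n) (hn' : p ∈ betaSet d n')
    (hadj : n' + 1 = n ∨ n + 1 = n') (h1 : 1 ≤ n') (hd : n' ≤ d) :
    p ∈ gammaSet d n ↔ 3 * level d n' p - 2 * level d n p < betaLow d := by
  refine ⟨fun h => h.2 n' hd h1 hadj, fun hW => ⟨hn, fun k hk _ hadjk => ?_⟩⟩
  by_cases hkn' : k = n'
  · exact hkn' ▸ hW
  linarith [level_lt_betaLow hn' (k := k) (by omega) (by omega), betaLow_lt_level hn]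

lemma level_lt_one_of_mem_deltaSet (hp : p ∈ deltaSet d n) (hk : k ≤ d + 1) (hkn : k ≠ n) :
    level d k p < 1 :=
  hp.2 k hk hkn

lemma mem_betaSet_of_mem_deltaSet (hp : p ∈ deltaSet d n) (hn : n ≤ d)
    (hlow : betaLow d < level d n p) : p ∈ betaSet d n := by
  have h1 := one_lt_betaLow (d := d)
  refine mem_betaSet_of_forall_lt_betaLow (n' := n + 1) (by omega) hlow
    (by linarith [hp.1, deltaCap_lt_betaCap (d := d)]) ?_ ?_
    fun k hk hkn _ => by linarith [level_lt_one_of_mem_deltaSet hp hk hkn]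
  · linarith [level_lt_one_of_mem_deltaSet hp (k := n + 1) (by omega) (by omega),
      one_lt_betaLow (d := d), betaLow_lt_deltaCap (d := d), deltaCap_lt_betaCap (d := d)]
  · linarith [level_lt_one_of_mem_deltaSet hp (k := n + 1) (by omega) (by omega),
      betaTol_pos (d := d)]

lemma mem_gammaSet_of_mem_deltaSet (hβ : p ∈ betaSet d n) (hδ : p ∈ deltaSet d n) :
    p ∈ gammaSet d n :=
  ⟨hβ, fun k hk _ hadj => by
    linarith [level_lt_one_of_mem_deltaSet hδ (k := k) (by omega) (by omega),
      betaLow_lt_level hβ, one_lt_betaLow (d := d)]⟩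

lemma mem_alphaSet_of_mem_deltaSet (hp : p ∈ deltaSet d n) (hn : n ≤ d)
    (hhigh : 1 ≤ level d n p) : p ∈ alphaSet d n :=
  ⟨hp, coord_one_pos (by omega) hhigh (level_lt_one_of_mem_deltaSet hp (by omega) (by omega))⟩

def realization (d : ℕ) (n : Fin (4 * d)) : Set (Euc 2) :=
  if (n : ℕ) < d then alphaSet d (n + 1)
  else if (n : ℕ) < 2 * d then betaSet d (n - d + 1)
  else if (n : ℕ) < 3 * d then gammaSet d (n - 2 * d + 1)
  else deltaSet d (n - 3 * d + 1)

lemma isOpenConvex_realization (n : Fin (4 * d)) : IsOpenConvex (realization d n) := by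
  unfold realization
  split_ifs
  exacts [isOpenConvex_alphaSet _, isOpenConvex_betaSet _, isOpenConvex_gammaSet _,
    isOpenConvex_deltaSet _]

@[simp] lemma val_idxA (i : Fin d) : (idxA d i : ℕ) = i := rfl
@[simp] lemma val_idxB (i : Fin d) : (idxB d i : ℕ) = d + i := rfl
@[simp] lemma val_idxC (i : Fin d) : (idxC d i : ℕ) = 2 * d + i := rfl
@[simp] lemma val_idxD (i : Fin d) : (idxD d i : ℕ) = 3 * d + i := rfl

lemma realization_idxA (i : Fin d) : realization d (idxA d i) = alphaSet d (i + 1) := by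
  simp [realization]

lemma realization_idxB (i : Fin d) : realization d (idxB d i) = betaSet d (i + 1) := by
  simp [realization, show d + (i : ℕ) < 2 * d by omega]

lemma realization_idxC (i : Fin d) : realization d (idxC d i) = gammaSet d (i + 1) := by
  simp [realization, show ¬ 2 * d + (i : ℕ) < d by omega, show 2 * d + (i : ℕ) < 3 * d by omega]

lemma realization_idxD (i : Fin d) : realization d (idxD d i) = deltaSet d (i + 1) := by
  simp [realization, show ¬ 3 * d + (i : ℕ) < d by omega, show ¬ 3 * d + (i : ℕ) < 2 * d by omega]

lemma exists_eq_idx (n : Fin (4 * d)) : (∃ i, n = idxA d i) ∨ (∃ i, n = idxB d i) ∨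
    (∃ i, n = idxC d i) ∨ (∃ i, n = idxD d i) := by
  have := n.isLt
  by_cases hA : (n : ℕ) < d
  · exact .inl ⟨⟨n, hA⟩, rfl⟩
  by_cases hB : (n : ℕ) < 2 * d
  · exact .inr <| .inl ⟨⟨n - d, by omega⟩, Fin.ext (by simp; omega)⟩
  by_cases hC : (n : ℕ) < 3 * d
  · exact .inr <| .inr <| .inl ⟨⟨n - 2 * d, by omega⟩, Fin.ext (by simp; omega)⟩
  · exact .inr <| .inr <| .inr ⟨⟨n - 3 * d, by omega⟩, Fin.ext (by simp; omega)⟩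

lemma mem_image_idxA {n : Fin (4 * d)} : n ∈ Finset.univ.image (idxA d) ↔ (n : ℕ) < d := by
  refine ⟨fun h => ?_, fun h => Finset.mem_image.2 ⟨⟨n, h⟩, Finset.mem_univ _, rfl⟩⟩
  obtain ⟨i, -, rfl⟩ := Finset.mem_image.1 h
  exact i.isLt

lemma mem_image_idxD {n : Fin (4 * d)} : n ∈ Finset.univ.image (idxD d) ↔ 3 * d ≤ n := by
  refine ⟨fun h => ?_, fun h => Finset.mem_image.2 ⟨⟨n - 3 * d, by omega⟩, Finset.mem_univ _, ?_⟩⟩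
  · obtain ⟨i, -, rfl⟩ := Finset.mem_image.1 h
    exact Nat.le_add_right _ _
  · ext; simp; omega

def HasPattern (d : ℕ) (p : Euc 2) (a b c e : ℕ → Prop) : Prop :=
  ∀ n, 1 ≤ n → n ≤ d → (p ∈ alphaSet d n ↔ a n) ∧ (p ∈ betaSet d n ↔ b n) ∧
    (p ∈ gammaSet d n ↔ c n) ∧ (p ∈ deltaSet d n ↔ e n)

lemma codeword_eq_of_hasPattern {a b c e : ℕ → Prop} {T : Finset (Fin (4 * d))}
    (hp : HasPattern d p a b c e)
    (hT : ∀ m : Fin d, (idxA d m ∈ T ↔ a (m + 1)) ∧ (idxB d m ∈ T ↔ b (m + 1)) ∧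
      (idxC d m ∈ T ↔ c (m + 1)) ∧ (idxD d m ∈ T ↔ e (m + 1))) :
    codeword (realization d) p = T := by
  ext n
  rw [mem_codeword]
  rcases exists_eq_idx n with ⟨m, rfl⟩ | ⟨m, rfl⟩ | ⟨m, rfl⟩ | ⟨m, rfl⟩ <;>
  have hpm := hp (m + 1) (by omega) (by omega)
  · rw [realization_idxA, (hT m).1]; exact hpm.1
  · rw [realization_idxB, (hT m).2.1]; exact hpm.2.1
  · rw [realization_idxC, (hT m).2.2.1]; exact hpm.2.2.1
  · rw [realization_idxD, (hT m).2.2.2]; exact hpm.2.2.2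

lemma codeword_eq_empty (hβ : ∀ n, 1 ≤ n → n ≤ d → p ∉ betaSet d n)
    (hδ : ∀ n, 1 ≤ n → n ≤ d → p ∉ deltaSet d n) : codeword (realization d) p = ∅ :=
  codeword_eq_of_hasPattern (a := fun _ => False) (b := fun _ => False) (c := fun _ => False)
    (e := fun _ => False)
    (fun n h1 hd => ⟨iff_of_false (fun h => hδ n h1 hd h.1) id, iff_of_false (hβ n h1 hd) id,
      iff_of_false (fun h => hβ n h1 hd h.1) id, iff_of_false (hδ n h1 hd) id⟩)
    fun m => by simp

lemma codeword_eq_single (i : Fin d) (hβ : p ∈ betaSet d (i + 1))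
    (huniq : ∀ m, 1 ≤ m → m ≤ d → p ∈ betaSet d m → m = i + 1)
    (hδ : ∀ n, 1 ≤ n → n ≤ d → p ∉ deltaSet d n) :
    codeword (realization d) p = {idxB d i, idxC d i} := by
  have hγ := mem_gammaSet_of_unique hβ (by omega) huniq
  refine codeword_eq_of_hasPattern (a := fun _ => False) (b := (· = i + 1)) (c := (· = i + 1))
    (e := fun _ => False) (fun n h1 hd => ⟨iff_of_false (fun h => hδ n h1 hd h.1) id,
      ⟨huniq n h1 hd, by rintro rfl; exact hβ⟩,
      ⟨fun h => huniq n h1 hd h.1, by rintro rfl; exact hγ⟩,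
      iff_of_false (hδ n h1 hd) id⟩) fun m => ?_
  simp [Fin.ext_iff]
  omega

lemma hasPattern_pair {t t' : ℕ} (htt' : t' = t + 1) (h1 : 1 ≤ t) (hd : t' ≤ d)
    (ht : p ∈ betaSet d t) (ht' : p ∈ betaSet d t') :
    HasPattern d p (fun _ => False) (fun n => n = t ∨ n = t')
      (fun n => n = t ∧ 3 * level d t' p - 2 * level d t p < betaLow d ∨
        n = t' ∧ 3 * level d t p - 2 * level d t' p < betaLow d) (fun _ => False) := by
  have hδ : ∀ n, p ∉ deltaSet d n := by
    intro n hn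
    by_cases hnt : n = t
    · linarith [level_lt_one_of_mem_deltaSet hn (k := t') (by omega) (by omega),
        betaLow_lt_level ht', one_lt_betaLow (d := d)]
    · linarith [level_lt_one_of_mem_deltaSet hn (k := t) (by omega) (Ne.symm hnt),
        betaLow_lt_level ht, one_lt_betaLow (d := d)]
  have hβ : ∀ n, p ∈ betaSet d n → n = t ∨ n = t' := fun n hn => by
    have := eq_or_adjacent_of_mem_betaSet hn ht (by omega)
    have := eq_or_adjacent_of_mem_betaSet hn ht' (by omega)
    omega
  have hγt := mem_gammaSet_iff_of_adjacent ht ht' (by omega) (by omega) hd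
  have hγt' := mem_gammaSet_iff_of_adjacent ht' ht (by omega) h1 (by omega)
  refine fun n _ _ => ⟨iff_of_false (fun h => hδ n h.1) id, ⟨hβ n, ?_⟩, ⟨fun h => ?_, ?_⟩,
    iff_of_false (hδ n) id⟩
  · rintro (rfl | rfl) <;> assumption
  · rcases hβ n h.1 with rfl | rfl
    exacts [.inl ⟨rfl, hγt.1 h⟩, .inr ⟨rfl, hγt'.1 h⟩]
  · rintro (⟨rfl, hW⟩ | ⟨rfl, hW⟩)
    exacts [hγt.2 hW, hγt'.2 hW]

lemma codeword_eq_pair_left (i j : Fin d) (hij : (j : ℕ) = i + 1) (hi : p ∈ betaSet d (i + 1))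
    (hj : p ∈ betaSet d (j + 1))
    (hW : 3 * level d (j + 1) p - 2 * level d (i + 1) p < betaLow d) :
    codeword (realization d) p = {idxB d i, idxB d j, idxC d i} := by
  have hW' : ¬ 3 * level d (i + 1) p - 2 * level d (j + 1) p < betaLow d := by
    linarith [betaLow_lt_level hi, betaLow_lt_level hj]
  refine codeword_eq_of_hasPattern (hasPattern_pair (by omega) (by omega) (by omega) hi hj)
    fun m => ?_
  simp [Fin.ext_iff, hW, hW']
  omega

lemma codeword_eq_pair_right (i j : Fin d) (hij : (j : ℕ) = i + 1) (hi : p ∈ betaSet d (i + 1))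
    (hj : p ∈ betaSet d (j + 1))
    (hW : 3 * level d (i + 1) p - 2 * level d (j + 1) p < betaLow d) :
    codeword (realization d) p = {idxB d i, idxB d j, idxC d j} := by
  have hW' : ¬ 3 * level d (j + 1) p - 2 * level d (i + 1) p < betaLow d := by
    linarith [betaLow_lt_level hi, betaLow_lt_level hj]
  refine codeword_eq_of_hasPattern (hasPattern_pair (by omega) (by omega) (by omega) hi hj)
    fun m => ?_
  simp [Fin.ext_iff, hW, hW']
  omega

lemma codeword_eq_pair (i j : Fin d) (hij : (j : ℕ) = i + 1) (hi : p ∈ betaSet d (i + 1))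
    (hj : p ∈ betaSet d (j + 1))
    (hW : ¬ 3 * level d (j + 1) p - 2 * level d (i + 1) p < betaLow d)
    (hW' : ¬ 3 * level d (i + 1) p - 2 * level d (j + 1) p < betaLow d) :
    codeword (realization d) p = {idxB d i, idxB d j} := by
  refine codeword_eq_of_hasPattern (hasPattern_pair (by omega) (by omega) (by omega) hi hj)
    fun m => ?_
  simp [Fin.ext_iff, hW, hW']
  omega

lemma hasPattern_of_mem_deltaSet (hnd : n ≤ d) (hδ : p ∈ deltaSet d n)
    (hhigh : 1 ≤ level d n p) :
    HasPattern d p (· = n) (fun m => m = n ∧ betaLow d < level d n p)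
      (fun m => m = n ∧ betaLow d < level d n p) (· = n) := by
  have hA := one_lt_betaLow (d := d)
  have hδ' : ∀ m, p ∈ deltaSet d m → m = n := fun m hm => by
    by_contra hmn
    linarith [level_lt_one_of_mem_deltaSet hm (k := n) (by omega) (Ne.symm hmn)]
  have hβ' : ∀ m, m ≤ d → p ∈ betaSet d m → m = n ∧ betaLow d < level d n p := fun m hmd hm => by
    by_cases hmn : m = n
    · exact ⟨hmn, hmn ▸ betaLow_lt_level hm⟩
    · linarith [level_lt_one_of_mem_deltaSet hδ (k := m) (by omega) hmn, betaLow_lt_level hm]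
  intro m _ hmd
  refine ⟨⟨fun h => hδ' m h.1, ?_⟩, ⟨hβ' m hmd, ?_⟩, ⟨fun h => hβ' m hmd h.1, ?_⟩,
    ⟨hδ' m, by rintro rfl; exact hδ⟩⟩
  · rintro rfl; exact mem_alphaSet_of_mem_deltaSet hδ hnd hhigh
  · rintro ⟨rfl, hlow⟩; exact mem_betaSet_of_mem_deltaSet hδ hnd hlow
  · rintro ⟨rfl, hlow⟩
    exact mem_gammaSet_of_mem_deltaSet (mem_betaSet_of_mem_deltaSet hδ hnd hlow) hδ

lemma codeword_eq_quad (i : Fin d) (hδ : p ∈ deltaSet d (i + 1))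
    (hlow : betaLow d < level d (i + 1) p) :
    codeword (realization d) p = {idxA d i, idxB d i, idxC d i, idxD d i} := by
  refine codeword_eq_of_hasPattern (hasPattern_of_mem_deltaSet (by omega) hδ
    (by linarith [one_lt_betaLow (d := d)])) fun m => ?_
  simp [Fin.ext_iff, hlow]
  omega

lemma codeword_eq_alpha_delta (i : Fin d) (hδ : p ∈ deltaSet d (i + 1))
    (hhigh : 1 ≤ level d (i + 1) p) (hlow : level d (i + 1) p ≤ betaLow d) :
    codeword (realization d) p = {idxA d i, idxD d i} := by
  refine codeword_eq_of_hasPattern (hasPattern_of_mem_deltaSet (by omega) hδ hhigh)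
    fun m => ?_
  simp [Fin.ext_iff, not_lt.2 hlow]
  omega

lemma hasPattern_of_forall_level_lt_one (hall : ∀ k ≤ d + 1, level d k p < 1) :
    HasPattern d p (fun _ => 0 < p 1) (fun _ => False) (fun _ => False) (fun _ => True) := by
  have hβ : ∀ n, n ≤ d → p ∉ betaSet d n := fun n hn h => by
    linarith [hall n (by omega), betaLow_lt_level h, one_lt_betaLow (d := d)]
  have hδ : ∀ n, n ≤ d → p ∈ deltaSet d n := fun n hn =>
    ⟨by linarith [hall n (by omega), one_lt_betaLow (d := d), betaLow_lt_deltaCap (d := d)],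
      fun k hk _ => hall k hk⟩
  exact fun n _ hnd => ⟨⟨And.right, fun h => ⟨hδ n hnd, h⟩⟩, iff_of_false (hβ n hnd) id,
    iff_of_false (fun h => hβ n hnd h.1) id, iff_of_true (hδ n hnd) trivial⟩

lemma codeword_eq_alpha_delta_all (hall : ∀ k ≤ d + 1, level d k p < 1) (hp : 0 < p 1) :
    codeword (realization d) p = Finset.univ.image (idxA d) ∪ Finset.univ.image (idxD d) := by
  refine codeword_eq_of_hasPattern (hasPattern_of_forall_level_lt_one hall) fun m => ?_
  simp [-Finset.mem_image, mem_image_idxA, mem_image_idxD, hp]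
  omega

lemma codeword_eq_delta_all (hall : ∀ k ≤ d + 1, level d k p < 1) (hp : p 1 ≤ 0) :
    codeword (realization d) p = Finset.univ.image (idxD d) := by
  refine codeword_eq_of_hasPattern (hasPattern_of_forall_level_lt_one hall) fun m => ?_
  simp [-Finset.mem_image, mem_image_idxD, not_lt.2 hp]
  omega

lemma exists_fin_eq_add_one (h1 : 1 ≤ n) (hd : n ≤ d) : ∃ i : Fin d, n = i + 1 :=
  ⟨⟨n - 1, by omega⟩, by simp; omega⟩

lemma codeword_mem_of_mem_deltaSet (hn1 : 1 ≤ n) (hnd : n ≤ d) (hδ : p ∈ deltaSet d n) :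
    codeword (realization d) p ∈ code2dd d := by
  obtain ⟨i, rfl⟩ := exists_fin_eq_add_one hn1 hnd
  rcases lt_or_ge (level d (i + 1) p) 1 with hlt | hhigh
  · have hall : ∀ k ≤ d + 1, level d k p < 1 := fun k hk => by
      rcases eq_or_ne k (i + 1) with rfl | hki
      exacts [hlt, level_lt_one_of_mem_deltaSet hδ hk hki]
    rcases lt_or_ge 0 (p 1) with hp | hp
    · exact .inr <| .inr <| .inr <| .inr <| .inr <| .inr <| .inr <| .inl <|
        codeword_eq_alpha_delta_all hall hp
    · exact .inr <| .inr <| .inr <| .inr <| .inr <| .inr <| .inr <| .inr <|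
        codeword_eq_delta_all hall hp
  · rcases le_or_gt (level d (i + 1) p) (betaLow d) with hlow | hlow
    · exact .inr <| .inr <| .inr <| .inr <| .inr <| .inr <| .inl
        ⟨i, codeword_eq_alpha_delta i hδ hhigh hlow⟩
    · exact .inr <| .inr <| .inr <| .inr <| .inr <| .inl ⟨i, codeword_eq_quad i hδ hlow⟩

lemma codeword_mem_of_adjacent (i j : Fin d) (hij : (j : ℕ) = i + 1) (hi : p ∈ betaSet d (i + 1))
    (hj : p ∈ betaSet d (j + 1)) : codeword (realization d) p ∈ code2dd d := by
  by_cases hW : 3 * level d (j + 1) p - 2 * level d (i + 1) p < betaLow d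
  · exact .inr <| .inr <| .inl ⟨i, j, hij, codeword_eq_pair_left i j hij hi hj hW⟩
  by_cases hW' : 3 * level d (i + 1) p - 2 * level d (j + 1) p < betaLow d
  · exact .inr <| .inr <| .inr <| .inr <| .inl
      ⟨i, j, hij, codeword_eq_pair_right i j hij hi hj hW'⟩
  · exact .inr <| .inr <| .inr <| .inl ⟨i, j, hij, codeword_eq_pair i j hij hi hj hW hW'⟩

lemma codeword_mem_of_forall_not_mem_deltaSet (hδ : ∀ n, 1 ≤ n → n ≤ d → p ∉ deltaSet d n) :
    codeword (realization d) p ∈ code2dd d := by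
  by_cases hβ : ∃ n, 1 ≤ n ∧ n ≤ d ∧ p ∈ betaSet d n
  swap
  · push Not at hβ
    exact .inl (codeword_eq_empty hβ hδ)
  obtain ⟨n, hn1, hnd, hn⟩ := hβ
  obtain ⟨i, rfl⟩ := exists_fin_eq_add_one hn1 hnd
  by_cases huniq : ∀ m, 1 ≤ m → m ≤ d → p ∈ betaSet d m → m = i + 1
  · exact .inr <| .inl ⟨i, codeword_eq_single i hn huniq hδ⟩
  push Not at huniq
  obtain ⟨m, hm1, hmd, hm, hmi⟩ := huniq
  obtain ⟨j, rfl⟩ := exists_fin_eq_add_one hm1 hmd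
  rcases eq_or_adjacent_of_mem_betaSet hn hm (by omega) with h | h | h
  · exact absurd h.symm hmi
  · exact codeword_mem_of_adjacent i j (by omega) hn hm
  · exact codeword_mem_of_adjacent j i (by omega) hm hn

lemma codeword_mem_code2dd (p : Euc 2) : codeword (realization d) p ∈ code2dd d := by
  by_cases hδ : ∃ n, 1 ≤ n ∧ n ≤ d ∧ p ∈ deltaSet d n
  · obtain ⟨n, hn1, hnd, hn⟩ := hδ
    exact codeword_mem_of_mem_deltaSet hn1 hnd hn
  · push Not at hδ
    exact codeword_mem_of_forall_not_mem_deltaSet hδ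

lemma level_smul_dir_self (t : ℝ) (n : ℕ) : level d n (t • dir d n) = t := by
  simp [level_dir_self]

lemma level_smul_dir_le {t : ℝ} (ht : 0 ≤ t) (hk : k ≤ d + 1) (hn : n ≤ d + 1) (hkn : k ≠ n) :
    level d k (t • dir d n) ≤ cos (angle d) * t := by
  rw [map_smul, smul_eq_mul, mul_comm]
  exact mul_le_mul_of_nonneg_right (level_dir_le_cos_angle (by omega) (by omega) hkn) ht

lemma level_smul_dir_lt_one {t : ℝ} (h0 : 0 ≤ t) (hcap : t < betaCap d) (hk : k ≤ d + 1)
    (hn : n ≤ d + 1) (hkn : k ≠ n) : level d k (t • dir d n) < 1 := by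
  have := mul_lt_mul_of_pos_left hcap (cos_angle_pos (d := d))
  linarith [level_smul_dir_le h0 hk hn hkn, cos_angle_mul_betaCap_lt_one (d := d)]

lemma smul_dir_mem_deltaSet {t : ℝ} (hn : n ≤ d + 1) (h0 : 0 ≤ t) (hcap : t < deltaCap d) :
    t • dir d n ∈ deltaSet d n :=
  ⟨by rwa [level_smul_dir_self], fun _ hk hkn =>
    level_smul_dir_lt_one h0 (hcap.trans deltaCap_lt_betaCap) hk hn hkn⟩

lemma smul_dir_mem_betaSet {t : ℝ} (hn : n ≤ d) (hlow : betaLow d < t) (hcap : t < betaCap d) :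
    t • dir d n ∈ betaSet d n := by
  have h0 : 0 ≤ t := by linarith [one_lt_betaLow (d := d)]
  have hsucc := level_smul_dir_lt_one h0 hcap (k := n + 1) (n := n) (by omega) (by omega) (by omega)
  refine mem_betaSet_of_forall_lt_betaLow (n' := n + 1) (by omega) (by rwa [level_smul_dir_self])
    (by rwa [level_smul_dir_self]) ?_ ?_ fun k hk hkn _ => ?_
  · linarith [one_lt_betaLow (d := d), deltaCap_lt_betaCap (d := d), betaLow_lt_deltaCap (d := d)]
  · rw [level_smul_dir_self]; linarith [one_lt_betaLow (d := d), betaTol_pos (d := d)]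
  · linarith [level_smul_dir_lt_one h0 hcap hk (by omega) hkn, one_lt_betaLow (d := d)]

lemma exists_codeword_eq_empty : ∃ p, codeword (realization d) p = ∅ := by
  have h0 : level d 0 ((2 : ℝ) • dir d 0) = 2 := level_smul_dir_self _ _
  refine ⟨(2 : ℝ) • dir d 0, codeword_eq_empty (fun n _ _ h => ?_) fun n hn1 _ h => ?_⟩
  · linarith [level_lt_betaCap h (k := 0) (by omega), betaCap_lt_two (d := d)]
  · linarith [level_lt_one_of_mem_deltaSet h (k := 0) (by omega) (by omega)]

lemma exists_codeword_eq_single (i : Fin d) :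
    ∃ p, codeword (realization d) p = {idxB d i, idxC d i} := by
  obtain ⟨t, hRt, htB⟩ := exists_between (deltaCap_lt_betaCap (d := d))
  have h1 : 1 < t := by linarith [one_lt_betaLow (d := d), betaLow_lt_deltaCap (d := d)]
  have hlev : level d (i + 1) (t • dir d (i + 1)) = t := level_smul_dir_self _ _
  refine ⟨t • dir d (i + 1), codeword_eq_single i
    (smul_dir_mem_betaSet (by omega) (by linarith [betaLow_lt_deltaCap (d := d)]) htB)
    (fun m _ hmd hm => ?_) fun n _ _ hn => ?_⟩
  · by_contra hmi
    linarith [level_smul_dir_lt_one (by linarith) htB (k := m) (by omega) (by omega) hmi,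
      betaLow_lt_level hm, one_lt_betaLow (d := d)]
  · rcases eq_or_ne n (i + 1) with rfl | hni
    · linarith [hn.1]
    · linarith [level_lt_one_of_mem_deltaSet hn (k := i + 1) (by omega) (Ne.symm hni)]

lemma exists_codeword_eq_quad (i : Fin d) :
    ∃ p, codeword (realization d) p = {idxA d i, idxB d i, idxC d i, idxD d i} := by
  obtain ⟨t, hAt, htR⟩ := exists_between (betaLow_lt_deltaCap (d := d))
  refine ⟨t • dir d (i + 1), codeword_eq_quad i (smul_dir_mem_deltaSet (by omega)
    (by linarith [one_lt_betaLow (d := d)]) htR) ?_⟩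
  rwa [level_smul_dir_self]

lemma exists_codeword_eq_alpha_delta (i : Fin d) :
    ∃ p, codeword (realization d) p = {idxA d i, idxD d i} := by
  obtain ⟨t, h1, hA⟩ := exists_between (one_lt_betaLow (d := d))
  refine ⟨t • dir d (i + 1), codeword_eq_alpha_delta i (smul_dir_mem_deltaSet (by omega)
    (by linarith) (by linarith [betaLow_lt_deltaCap (d := d)])) ?_ ?_⟩ <;>
  rw [level_smul_dir_self] <;> linarith

lemma exists_codeword_eq_alpha_delta_all :
    ∃ p, codeword (realization d) p = Finset.univ.image (idxA d) ∪ Finset.univ.image (idxD d) := by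
  refine ⟨(1 / 2 : ℝ) • dir d 0, codeword_eq_alpha_delta_all (fun k _ => ?_) ?_⟩
  · simp only [map_smul, level_dir, smul_eq_mul, Nat.cast_zero, sub_zero]
    linarith [cos_le_one (k * angle d)]
  · simp [dir]

lemma exists_codeword_eq_delta_all :
    ∃ p, codeword (realization d) p = Finset.univ.image (idxD d) :=
  ⟨0, codeword_eq_delta_all (fun k _ => by simp) (by simp)⟩

lemma level_cone_le {a b M : ℝ} {j : ℕ} (ha : 0 ≤ a) (hb : 0 ≤ b) (hk : k ≤ d + 1)
    (hj : j + 1 ≤ d + 1) (hkj : k ≠ j) (hkj' : k ≠ j + 1)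
    (hM : level d j (a • dir d j + b • dir d (j + 1)) ≤ M)
    (hM' : level d (j + 1) (a • dir d j + b • dir d (j + 1)) ≤ M) :
    level d k (a • dir d j + b • dir d (j + 1)) ≤ cos (angle d) * M := by
  simp only [map_add, map_smul, smul_eq_mul, level_dir_self, level_dir_succ, level_succ_dir]
    at hM hM' ⊢
  have hc := cos_angle_pos (d := d)
  rcases lt_or_gt_of_ne hkj with hlt | hgt
  · have h₀ := level_dir_le_cos_angle (d := d) (k := k) (j := j) (by omega) (by omega) hkj
    have h₁ := level_dir_le_sq (d := d) (k := k) (j := j + 1) (by omega) (by omega) (by omega)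
    nlinarith [mul_le_mul_of_nonneg_left h₀ ha, mul_le_mul_of_nonneg_left h₁ hb]
  · have h₀ := level_dir_le_sq (d := d) (k := k) (j := j) (by omega) (by omega) (by omega)
    have h₁ := level_dir_le_cos_angle (d := d) (k := k) (j := j + 1) (by omega) (by omega) hkj'
    nlinarith [mul_le_mul_of_nonneg_left h₀ ha, mul_le_mul_of_nonneg_left h₁ hb]

lemma exists_mem_betaSet_pair {n n' : ℕ} (hn' : n' = n + 1) (hd : n' ≤ d + 1) {P Q : ℝ}
    (hP : betaLow d < P) (hP' : P < betaCap d) (hQ : betaLow d < Q) (hQ' : Q < betaCap d)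
    (hPQ : P - Q < betaTol d) (hQP : Q - P < betaTol d) :
    ∃ p, level d n p = P ∧ level d n' p = Q ∧ p ∈ betaSet d n ∧ p ∈ betaSet d n' := by
  subst hn'
  have hc := cos_angle_pos (d := d)
  have hcB := cos_angle_mul_betaCap_lt_one (d := d)
  have hA := one_lt_betaLow (d := d)
  have hden : 0 < 1 - cos (angle d) ^ 2 := by nlinarith [cos_angle_lt_one (d := d)]
  have hcP := mul_lt_mul_of_pos_left hP' hc
  have hcQ := mul_lt_mul_of_pos_left hQ' hc
  -- `(a, b)` solves `a + b cos φ = P`, `a cos φ + b = Q`.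
  set a := (P - cos (angle d) * Q) / (1 - cos (angle d) ^ 2) with ha_def
  set b := (Q - cos (angle d) * P) / (1 - cos (angle d) ^ 2) with hb_def
  have ha : 0 ≤ a := div_nonneg (by linarith) hden.le
  have hb : 0 ≤ b := div_nonneg (by linarith) hden.le
  have hPn : level d n (a • dir d n + b • dir d (n + 1)) = P := by
    simp only [map_add, map_smul, smul_eq_mul, level_dir_self, level_dir_succ, ha_def, hb_def]
    field_simp
    ring
  have hQn : level d (n + 1) (a • dir d n + b • dir d (n + 1)) = Q := by
    simp only [map_add, map_smul, smul_eq_mul, level_dir_self, level_succ_dir, ha_def, hb_def]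
    field_simp
    ring
  have hothers : ∀ k ≤ d + 1, k ≠ n → k ≠ n + 1 →
      level d k (a • dir d n + b • dir d (n + 1)) < betaLow d := fun k hk h h' => by
    linarith [level_cone_le ha hb hk (by omega) h h' (hPn ▸ hP'.le) (hQn ▸ hQ'.le)]
  refine ⟨_, hPn, hQn, mem_betaSet_of_forall_lt_betaLow (n' := n + 1) (by omega) (hPn ▸ hP)
    (hPn ▸ hP') (hQn ▸ hQ') (by rw [hPn, hQn]; exact hQP) hothers,
    mem_betaSet_of_forall_lt_betaLow (n' := n) (by omega) (hQn ▸ hQ) (hQn ▸ hQ') (hPn ▸ hP')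
    (by rw [hPn, hQn]; exact hPQ) fun k hk h h' => hothers k hk h' h⟩

lemma exists_codeword_eq_pair_left (i j : Fin d) (hij : (j : ℕ) = i + 1) :
    ∃ p, codeword (realization d) p = {idxB d i, idxB d j, idxC d i} := by
  have := betaTol_pos (d := d)
  have := betaCap_sub_betaLow (d := d)
  obtain ⟨p, hP, hQ, hi, hj⟩ := exists_mem_betaSet_pair (d := d) (n := i + 1) (n' := j + 1)
    (by omega) (by omega) (P := betaLow d + 3 * betaTol d / 4) (Q := betaLow d + betaTol d / 4)
    (by linarith) (by linarith) (by linarith) (by linarith) (by linarith) (by linarith)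
  exact ⟨p, codeword_eq_pair_left i j hij hi hj (by rw [hP, hQ]; linarith)⟩

lemma exists_codeword_eq_pair_right (i j : Fin d) (hij : (j : ℕ) = i + 1) :
    ∃ p, codeword (realization d) p = {idxB d i, idxB d j, idxC d j} := by
  have := betaTol_pos (d := d)
  have := betaCap_sub_betaLow (d := d)
  obtain ⟨p, hP, hQ, hi, hj⟩ := exists_mem_betaSet_pair (d := d) (n := i + 1) (n' := j + 1)
    (by omega) (by omega) (P := betaLow d + betaTol d / 4) (Q := betaLow d + 3 * betaTol d / 4)
    (by linarith) (by linarith) (by linarith) (by linarith) (by linarith) (by linarith)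
  exact ⟨p, codeword_eq_pair_right i j hij hi hj (by rw [hP, hQ]; linarith)⟩

lemma exists_codeword_eq_pair (i j : Fin d) (hij : (j : ℕ) = i + 1) :
    ∃ p, codeword (realization d) p = {idxB d i, idxB d j} := by
  have := betaTol_pos (d := d)
  have := betaCap_sub_betaLow (d := d)
  obtain ⟨p, hP, hQ, hi, hj⟩ := exists_mem_betaSet_pair (d := d) (n := i + 1) (n' := j + 1)
    (by omega) (by omega) (P := betaLow d + betaTol d / 4) (Q := betaLow d + betaTol d / 4)
    (by linarith) (by linarith) (by linarith) (by linarith) (by linarith) (by linarith)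
  exact ⟨p, codeword_eq_pair i j hij hi hj (by rw [hP, hQ]; linarith) (by rw [hP, hQ]; linarith)⟩

lemma exists_codeword_eq {σ : Finset (Fin (4 * d))} (hσ : σ ∈ code2dd d) :
    ∃ p, codeword (realization d) p = σ := by
  rcases hσ with rfl | ⟨i, rfl⟩ | ⟨i, j, hij, rfl⟩ | ⟨i, j, hij, rfl⟩ | ⟨i, j, hij, rfl⟩ |
    ⟨i, rfl⟩ | ⟨i, rfl⟩ | rfl | rfl
  exacts [exists_codeword_eq_empty, exists_codeword_eq_single i,
    exists_codeword_eq_pair_left i j hij, exists_codeword_eq_pair i j hij,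
    exists_codeword_eq_pair_right i j hij, exists_codeword_eq_quad i,
    exists_codeword_eq_alpha_delta i, exists_codeword_eq_alpha_delta_all,
    exists_codeword_eq_delta_all]

end Code2dd

theorem code2dd_open_in_plane_general (d : ℕ) :
    HasOpenReal (code2dd d) 2 := by
  refine ⟨Code2dd.realization d, fun n => (Code2dd.isOpenConvex_realization n).2,
    fun n => (Code2dd.isOpenConvex_realization n).1, ?_⟩
  rw [codeOf_eq_range]
  ext σ
  exact ⟨by rintro ⟨p, rfl⟩; exact Code2dd.codeword_mem_code2dd p, Code2dd.exists_codeword_eq⟩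

/-- The code `C_{(2,d,d)}` has an open convex realization in `ℝ^2`. -/
theorem code2dd_open_in_plane (d : ℕ) (hd : 2 ≤ d) :
    HasOpenReal (code2dd d) 2 :=
  code2dd_open_in_plane_general d

end
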